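/- Consider a grouped K-armed bandit instance with star topology, and let g_min be the group with smallest OPT value (it is unique, since every group's optimal arm is exclusive to that group and the values of θ are distinct). Let q* be a maximizer of the Nash program P(θ). Then for every group g ≠ g_min, s^g(q*) ≥ (1/2) · ∑_{a shared} Δ^g(a)·J^g(a), where the sum runs over all shared arms a (all of which lie in 𝒜_sub^g). -/

import Mathlib

open scoped Classical
open Finset

noncomputable section

/-- Bernoulli KL divergence `kl(p,q)`. -/
def klB (p q : ℝ) : ℝ :=
  p * Real.log (p / q) + (1 - p) * Real.log ((1 - p) / (1 - q))

/-- A grouped `K`-armed bandit instance: a finite set of arms `A`, a finite set of groups `G`,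
for each group a nonempty set of accessible arms (every arm accessible to some group),
and mean rewards `θ` with values in `(0,1)`. -/
structure GroupedBandit (A G : Type*) [Fintype A] [Fintype G] where
  acc : G → Finset A
  acc_nonempty : ∀ g, (acc g).Nonempty
  acc_cover : ∀ a, ∃ g, a ∈ acc g
  θ : A → ℝ
  θ_mem : ∀ a, θ a ∈ Set.Ioo (0 : ℝ) 1

namespace GroupedBandit

variable {A G : Type*} [Fintype A] [Fintype G] (I : GroupedBandit A G)

/-- `OPT(g) = max_{a ∈ 𝒜^g} θ(a)`. -/
def OPT (g : G) : ℝ := (I.acc g).sup' (I.acc_nonempty g) I.θ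

/-- `Δ^g(a) = OPT(g) − θ(a)`. -/
def Δ (g : G) (a : A) : ℝ := I.OPT g - I.θ a

/-- `𝒢_a = {g : a ∈ 𝒜^g}`. -/
def Ga (a : A) : Finset G := Finset.univ.filter (fun g => a ∈ I.acc g)

lemma Ga_nonempty (a : A) : (I.Ga a).Nonempty := by
  obtain ⟨g, hg⟩ := I.acc_cover a
  exact ⟨g, by simp [Ga, hg]⟩

/-- `𝒜_sub^g = {a ∈ 𝒜^g : θ(a) < OPT(g)}`. -/
def Asubg (g : G) : Finset A := (I.acc g).filter (fun a => I.θ a < I.OPT g)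

/-- `𝒜_sub = {a : a ∈ 𝒜_sub^g for every g ∈ 𝒢_a}`. -/
def Asub : Finset A := Finset.univ.filter (fun a => ∀ g ∈ I.Ga a, a ∈ I.Asubg g)

/-- `J^g(a) = 1 / kl(θ(a), OPT(g))`. -/
def Jg (g : G) (a : A) : ℝ := 1 / klB (I.θ a) (I.OPT g)

/-- `J(a) = max_{g ∈ 𝒢_a} J^g(a)`. -/
def J (a : A) : ℝ := (I.Ga a).sup' (I.Ga_nonempty a) fun g => I.Jg g a

/-- Feasibility for the Nash program `P(θ)`. -/
def Feasible (q : G → A → ℝ) : Prop :=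
  (∀ g a, 0 ≤ q g a) ∧
  (∀ a ∈ I.Asub, ∑ g, q g a = 1) ∧
  (∀ g a, ¬(a ∈ I.Asub ∧ a ∈ I.acc g) → q g a = 0)

/-- `s^g(q)`, the utility gain of group `g` under allocation `q`. -/
def s (q : G → A → ℝ) (g : G) : ℝ :=
  ∑ a ∈ I.Asubg g, I.Δ g a * I.Jg g a
    - ∑ a ∈ I.Asubg g ∩ I.Asub, I.Δ g a * q g a * I.J a

/-- `q` is a maximizer of the Nash program `P(θ)` with value `> −∞`:
it is feasible, all `s^g(q) > 0`, and it dominates (in Nash social welfare) every feasible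
point with finite value. -/
def NashOptimal (q : G → A → ℝ) : Prop :=
  I.Feasible q ∧ (∀ g, 0 < I.s q g) ∧
  ∀ q', I.Feasible q' → (∀ g, 0 < I.s q' g) →
    ∑ g, Real.log (I.s q' g) ≤ ∑ g, Real.log (I.s q g)

/-- Assumption 1: every group has a suboptimal arm shared with another group. -/
def Assumption1 : Prop :=
  ∀ g, ∃ a ∈ I.acc g, I.θ a < I.OPT g ∧ 2 ≤ (I.Ga a).card

/-- Star topology: at least two groups; every arm is either shared by all groups or exclusive
to one group; there is at least one shared arm; every shared arm is strictly worse than every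
group's optimum. -/
def Star : Prop :=
  2 ≤ Fintype.card G ∧
  (∀ a : A, I.Ga a = Finset.univ ∨ (I.Ga a).card = 1) ∧
  (∃ a : A, I.Ga a = Finset.univ) ∧
  (∀ a : A, I.Ga a = Finset.univ → ∀ g : G, I.θ a < I.OPT g)

end GroupedBandit

end


section KLHelpers

lemma klB_pos {p q : ℝ} (hp0 : 0 < p) (hq1 : q < 1) (hpq : p < q) : 0 < klB p q := by
  have hq0 : 0 < q := hp0.trans hpq
  have hp1 : p < 1 := hpq.trans hq1
  have h1p : (0:ℝ) < 1 - p := by linarith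
  have h1q : (0:ℝ) < 1 - q := by linarith
  have h1 : Real.log (q / p) < q / p - 1 :=
    Real.log_lt_sub_one_of_pos (by positivity)
      (by rw [ne_eq, div_eq_one_iff_eq hp0.ne']; exact hpq.ne')
  have h2 : Real.log ((1 - q) / (1 - p)) ≤ (1 - q) / (1 - p) - 1 :=
    Real.log_le_sub_one_of_pos (by positivity)
  rw [Real.log_div hq0.ne' hp0.ne'] at h1
  rw [Real.log_div h1q.ne' h1p.ne'] at h2
  have h1' := mul_lt_mul_of_pos_left h1 hp0
  have h2' := mul_le_mul_of_nonneg_left h2 h1p.le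
  have e1 : p * (q / p - 1) = q - p := by field_simp
  have e2 : (1 - p) * ((1 - q) / (1 - p) - 1) = p - q := by field_simp; ring
  unfold klB
  rw [Real.log_div hp0.ne' hq0.ne', Real.log_div h1p.ne' h1q.ne']
  nlinarith [h1', h2', e1, e2]

lemma klB_mono {p q1 q2 : ℝ} (hp0 : 0 < p) (hpq : p ≤ q1) (h12 : q1 ≤ q2) (hq2 : q2 < 1) :
    klB p q1 ≤ klB p q2 := by
  have hq10 : 0 < q1 := lt_of_lt_of_le hp0 hpq
  have hq20 : 0 < q2 := lt_of_lt_of_le hq10 h12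
  have hq11 : q1 < 1 := lt_of_le_of_lt h12 hq2
  have hp1 : p < 1 := lt_of_le_of_lt hpq hq11
  have h1p : (0:ℝ) < 1 - p := by linarith
  have h1q1 : (0:ℝ) < 1 - q1 := by linarith
  have h1q2 : (0:ℝ) < 1 - q2 := by linarith
  have hL1 : (0:ℝ) ≤ Real.log q2 - Real.log q1 := by
    have := Real.log_le_log hq10 h12
    linarith
  have hL2 : (0:ℝ) ≤ Real.log (1 - q1) - Real.log (1 - q2) := by
    have := Real.log_le_log h1q2 (by linarith : 1 - q2 ≤ 1 - q1)
    linarith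
  have h1c : q1 * (Real.log q2 - Real.log q1) ≤ q2 - q1 := by
    have h := Real.log_le_sub_one_of_pos (show (0:ℝ) < q2 / q1 by positivity)
    rw [Real.log_div hq20.ne' hq10.ne'] at h
    have h' := mul_le_mul_of_nonneg_left h hq10.le
    have e : q1 * (q2 / q1 - 1) = q2 - q1 := by field_simp
    linarith
  have h2c : (1 - q1) * (Real.log (1 - q2) - Real.log (1 - q1)) ≤ q1 - q2 := by
    have h := Real.log_le_sub_one_of_pos (show (0:ℝ) < (1 - q2) / (1 - q1) by positivity)
    rw [Real.log_div h1q2.ne' h1q1.ne'] at h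
    have h' := mul_le_mul_of_nonneg_left h h1q1.le
    have e : (1 - q1) * ((1 - q2) / (1 - q1) - 1) = q1 - q2 := by field_simp; ring
    linarith
  have hA : p * (Real.log q2 - Real.log q1) ≤ q2 - q1 := by
    nlinarith [mul_le_mul_of_nonneg_right hpq hL1]
  have hB : q2 - q1 ≤ (1 - p) * (Real.log (1 - q1) - Real.log (1 - q2)) := by
    nlinarith [mul_le_mul_of_nonneg_right (by linarith : 1 - q1 ≤ 1 - p) hL2]
  unfold klB
  rw [Real.log_div hp0.ne' hq10.ne', Real.log_div hp0.ne' hq20.ne',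
    Real.log_div h1p.ne' h1q1.ne', Real.log_div h1p.ne' h1q2.ne']
  nlinarith [hA, hB]

lemma GB_opt_mem {A G : Type*} [Fintype A] [Fintype G] (I : GroupedBandit A G) (g : G) :
    I.OPT g ∈ Set.Ioo (0:ℝ) 1 := by
  obtain ⟨a, ha, he⟩ := Finset.exists_mem_eq_sup' (I.acc_nonempty g) I.θ
  rw [GroupedBandit.OPT, he]
  exact I.θ_mem a

end KLHelpers

set_option maxHeartbeats 2000000 in
/-- In a star-topology instance, let `gmin` be the (unique) group with smallest
`OPT` value and let `qstar` maximize the Nash program `P(θ)`. Then every group `g ≠ gmin`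
retains at least half of its disagreement-point regret on shared arms as utility gain:
`s^g(qstar) ≥ (1/2) · ∑_{a shared} Δ^g(a) · J^g(a)`. -/
theorem nash_gain_half_for_nonmin {A G : Type*} [Fintype A] [Fintype G]
    (I : GroupedBandit A G) (hθ : Function.Injective I.θ) (hstar : I.Star)
    (gmin : G) (hgmin : ∀ g : G, g ≠ gmin → I.OPT gmin < I.OPT g)
    (qstar : G → A → ℝ) (hq : I.NashOptimal qstar)
    (g : G) (hg : g ≠ gmin) :
    (1 / 2) * ∑ a ∈ Finset.univ.filter (fun a : A => I.Ga a = Finset.univ),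
        I.Δ g a * I.Jg g a
      ≤ I.s qstar g := by
  classical
  obtain ⟨hG2, hdich, hex, hsharedlt⟩ := hstar
  obtain ⟨⟨hq0, hqsum, hqzero⟩, hpos, hoptim⟩ := hq
  set S : Finset A := Finset.univ.filter (fun a : A => I.Ga a = Finset.univ) with hS
  -- basic facts
  have hmem_acc : ∀ a : A, I.Ga a = Finset.univ → ∀ g' : G, a ∈ I.acc g' := by
    intro a ha g'
    have : g' ∈ I.Ga a := ha ▸ Finset.mem_univ g'
    simpa [GroupedBandit.Ga] using this
  have hopt_mem : ∀ g' : G, I.OPT g' ∈ Set.Ioo (0:ℝ) 1 := fun g' => GB_opt_mem I g'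
  have hsubg : ∀ a : A, I.Ga a = Finset.univ → ∀ g' : G, a ∈ I.Asubg g' := by
    intro a ha g'
    exact Finset.mem_filter.mpr ⟨hmem_acc a ha g', hsharedlt a ha g'⟩
  have hasub : ∀ a : A, I.Ga a = Finset.univ → a ∈ I.Asub := by
    intro a ha
    exact Finset.mem_filter.mpr ⟨Finset.mem_univ a, fun g' _ => hsubg a ha g'⟩
  have hΔpos : ∀ (g' : G) (a : A), a ∈ I.Asubg g' → 0 < I.Δ g' a := by
    intro g' a ha
    have h := (Finset.mem_filter.mp ha).2
    simp only [GroupedBandit.Δ]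
    linarith
  have hJg_pos : ∀ (g' : G) (a : A), a ∈ I.Asubg g' → 0 < I.Jg g' a := by
    intro g' a ha
    have h := (Finset.mem_filter.mp ha).2
    have h1 := I.θ_mem a
    have h2 := hopt_mem g'
    show (0:ℝ) < 1 / klB (I.θ a) (I.OPT g')
    exact one_div_pos.mpr (klB_pos h1.1 h2.2 h)
  have hJ_pos : ∀ a ∈ I.Asub, 0 < I.J a := by
    intro a ha
    obtain ⟨g0, hg0⟩ := I.Ga_nonempty a
    have h1 : a ∈ I.Asubg g0 := (Finset.mem_filter.mp ha).2 g0 hg0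
    exact lt_of_lt_of_le (hJg_pos g0 a h1) (Finset.le_sup' (fun g'' => I.Jg g'' a) hg0)
  have hq_le_one : ∀ a ∈ I.Asub, ∀ g' : G, qstar g' a ≤ 1 := by
    intro a ha g'
    have h := hqsum a ha
    have h2 : qstar g' a ≤ ∑ g'', qstar g'' a :=
      Finset.single_le_sum (fun i _ => hq0 i a) (Finset.mem_univ g')
    linarith
  have hq2_le_one : ∀ a : A, I.Ga a = Finset.univ → qstar gmin a + qstar g a ≤ 1 := by
    intro a ha
    have hsum := hqsum a (hasub a ha)
    have h2 := Finset.sum_le_sum_of_subset_of_nonneg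
      (Finset.subset_univ ({gmin, g} : Finset G)) (fun i _ _ => hq0 i a)
    rw [Finset.sum_pair (Ne.symm hg)] at h2
    linarith
  have hoptmin_le : ∀ g' : G, I.OPT gmin ≤ I.OPT g' := by
    intro g'
    by_cases h : g' = gmin
    · rw [h]
    · exact (hgmin g' h).le
  have hJg_le_min : ∀ a : A, I.Ga a = Finset.univ → ∀ g' : G, I.Jg g' a ≤ I.Jg gmin a := by
    intro a ha g'
    have hθa := I.θ_mem a
    have hlt : I.θ a < I.OPT gmin := hsharedlt a ha gmin
    have hkl : klB (I.θ a) (I.OPT gmin) ≤ klB (I.θ a) (I.OPT g') :=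
      klB_mono hθa.1 hlt.le (hoptmin_le g') (hopt_mem g').2
    have hklpos : 0 < klB (I.θ a) (I.OPT gmin) := klB_pos hθa.1 (hopt_mem gmin).2 hlt
    exact one_div_le_one_div_of_le hklpos hkl
  have hJ_le_min : ∀ a : A, I.Ga a = Finset.univ → I.J a ≤ I.Jg gmin a := by
    intro a ha
    exact Finset.sup'_le _ _ (fun g' _ => hJg_le_min a ha g')
  have hJ_excl : ∀ (a : A) (g' : G), a ∈ I.acc g' → (I.Ga a).card = 1 →
      I.J a = I.Jg g' a := by
    intro a g' hacc hcard
    have hg'mem : g' ∈ I.Ga a := by simp [GroupedBandit.Ga, hacc]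
    obtain ⟨b, hb⟩ := Finset.card_eq_one.mp hcard
    have hbg : b = g' := by
      have := hg'mem
      rw [hb, Finset.mem_singleton] at this
      exact this.symm
    subst hbg
    apply le_antisymm
    · apply Finset.sup'_le
      intro x hx
      rw [hb, Finset.mem_singleton] at hx
      rw [hx]
    · exact Finset.le_sup' (fun g'' => I.Jg g'' a) hg'mem
  -- the main sums
  set T : Finset A := I.Asubg g ∩ I.Asub with hT
  set Tm : Finset A := I.Asubg gmin ∩ I.Asub with hTm
  set C : ℝ := ∑ a ∈ S, I.Δ g a * I.Jg g a with hC
  set D : ℝ := ∑ a ∈ S, I.Δ g a * qstar g a * I.J a with hD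
  set E : ℝ := ∑ a ∈ S, I.Δ gmin a * qstar g a * I.J a with hE
  set sg : ℝ := I.s qstar g with hsg
  set smin : ℝ := I.s qstar gmin with hsmin
  have hSsubT : ∀ g' : G, S ⊆ I.Asubg g' ∩ I.Asub := by
    intro g' a ha
    have hsh : I.Ga a = Finset.univ := by
      have := Finset.mem_filter.mp ha
      exact this.2
    exact Finset.mem_inter.mpr ⟨hsubg a hsh g', hasub a hsh⟩
  have hSmem : ∀ a ∈ S, I.Ga a = Finset.univ := by
    intro a ha
    exact (Finset.mem_filter.mp ha).2
  have hD0 : 0 ≤ D := by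
    rw [hD]
    apply Finset.sum_nonneg
    intro a ha
    have hsh := hSmem a ha
    exact mul_nonneg (mul_nonneg (hΔpos g a (hsubg a hsh g)).le (hq0 g a))
      (hJ_pos a (hasub a hsh)).le
  have hE0 : 0 ≤ E := by
    rw [hE]
    apply Finset.sum_nonneg
    intro a ha
    have hsh := hSmem a ha
    exact mul_nonneg (mul_nonneg (hΔpos gmin a (hsubg a hsh gmin)).le (hq0 g a))
      (hJ_pos a (hasub a hsh)).le
  have hsg_eq : sg = (∑ a ∈ I.Asubg g, I.Δ g a * I.Jg g a)
      - ∑ a ∈ T, I.Δ g a * qstar g a * I.J a := rfl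
  have hsmin_eq : smin = (∑ a ∈ I.Asubg gmin, I.Δ gmin a * I.Jg gmin a)
      - ∑ a ∈ Tm, I.Δ gmin a * qstar gmin a * I.J a := rfl
  -- Step A : C ≤ sg + D
  have hsplitT : ∑ a ∈ T, I.Δ g a * qstar g a * I.J a
      = (∑ a ∈ T \ S, I.Δ g a * qstar g a * I.J a) + D := by
    rw [hD]
    exact (Finset.sum_sdiff (hSsubT g)).symm
  have hbound1 : ∑ a ∈ T \ S, I.Δ g a * qstar g a * I.J a
      ≤ ∑ a ∈ T \ S, I.Δ g a * I.Jg g a := by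
    apply Finset.sum_le_sum
    intro a ha
    obtain ⟨haT, haS⟩ := Finset.mem_sdiff.mp ha
    obtain ⟨hag, haAsub⟩ := Finset.mem_inter.mp haT
    have hnot : ¬ I.Ga a = Finset.univ := by
      intro h
      exact haS (by rw [hS]; simp [h])
    have hcard : (I.Ga a).card = 1 := (hdich a).resolve_left hnot
    have hacc : a ∈ I.acc g := (Finset.mem_filter.mp hag).1
    have hJeq : I.J a = I.Jg g a := hJ_excl a g hacc hcard
    have h1 := hΔpos g a hag
    have h2 := hJg_pos g a hag
    have h3 := hq_le_one a haAsub g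
    have h4 := hq0 g a
    rw [hJeq]
    nlinarith [mul_le_mul_of_nonneg_left h3 (mul_nonneg h1.le h2.le)]
  have hbound2 : C + ∑ a ∈ T \ S, I.Δ g a * I.Jg g a
      ≤ ∑ a ∈ I.Asubg g, I.Δ g a * I.Jg g a := by
    rw [hC, ← Finset.sum_union (Finset.disjoint_sdiff)]
    apply Finset.sum_le_sum_of_subset_of_nonneg
    · intro a ha
      rcases Finset.mem_union.mp ha with h | h
      · exact Finset.mem_inter.mp (hSsubT g h) |>.1
      · exact (Finset.mem_inter.mp (Finset.mem_sdiff.mp h).1).1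
    · intro a ha _
      exact mul_nonneg (hΔpos g a ha).le (hJg_pos g a ha).le
  have stepA : C ≤ sg + D := by
    linarith [hsg_eq, hsplitT, hbound1, hbound2]
  -- Step B : E ≤ smin
  have hsplitTm : ∑ a ∈ Tm, I.Δ gmin a * qstar gmin a * I.J a
      = (∑ a ∈ Tm \ S, I.Δ gmin a * qstar gmin a * I.J a)
        + ∑ a ∈ S, I.Δ gmin a * qstar gmin a * I.J a := by
    exact (Finset.sum_sdiff (hSsubT gmin)).symm
  have hb1 : (∑ a ∈ S, I.Δ gmin a * qstar gmin a * I.J a) + E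
      ≤ ∑ a ∈ S, I.Δ gmin a * I.Jg gmin a := by
    rw [hE, ← Finset.sum_add_distrib]
    apply Finset.sum_le_sum
    intro a ha
    have hsh := hSmem a ha
    have hΔ := hΔpos gmin a (hsubg a hsh gmin)
    have hJp := hJ_pos a (hasub a hsh)
    have hJle := hJ_le_min a hsh
    have hq2 := hq2_le_one a hsh
    have k1 : I.Δ gmin a * I.J a * (qstar gmin a + qstar g a) ≤ I.Δ gmin a * I.J a * 1 :=
      mul_le_mul_of_nonneg_left hq2 (mul_nonneg hΔ.le hJp.le)
    have k2 : I.Δ gmin a * I.J a ≤ I.Δ gmin a * I.Jg gmin a :=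
      mul_le_mul_of_nonneg_left hJle hΔ.le
    nlinarith
  have hb2 : ∑ a ∈ Tm \ S, I.Δ gmin a * qstar gmin a * I.J a
      ≤ ∑ a ∈ Tm \ S, I.Δ gmin a * I.Jg gmin a := by
    apply Finset.sum_le_sum
    intro a ha
    obtain ⟨haT, haS⟩ := Finset.mem_sdiff.mp ha
    obtain ⟨hag, haAsub⟩ := Finset.mem_inter.mp haT
    have hnot : ¬ I.Ga a = Finset.univ := by
      intro h
      exact haS (by rw [hS]; simp [h])
    have hcard : (I.Ga a).card = 1 := (hdich a).resolve_left hnot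
    have hacc : a ∈ I.acc gmin := (Finset.mem_filter.mp hag).1
    have hJeq : I.J a = I.Jg gmin a := hJ_excl a gmin hacc hcard
    have h1 := hΔpos gmin a hag
    have h2 := hJg_pos gmin a hag
    have h3 := hq_le_one a haAsub gmin
    have h4 := hq0 gmin a
    rw [hJeq]
    nlinarith [mul_le_mul_of_nonneg_left h3 (mul_nonneg h1.le h2.le)]
  have hb3 : (∑ a ∈ S, I.Δ gmin a * I.Jg gmin a) + ∑ a ∈ Tm \ S, I.Δ gmin a * I.Jg gmin a
      ≤ ∑ a ∈ I.Asubg gmin, I.Δ gmin a * I.Jg gmin a := by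
    rw [← Finset.sum_union (Finset.disjoint_sdiff)]
    apply Finset.sum_le_sum_of_subset_of_nonneg
    · intro a ha
      rcases Finset.mem_union.mp ha with h | h
      · exact Finset.mem_inter.mp (hSsubT gmin h) |>.1
      · exact (Finset.mem_inter.mp (Finset.mem_sdiff.mp h).1).1
    · intro a ha _
      exact mul_nonneg (hΔpos gmin a ha).le (hJg_pos gmin a ha).le
  have stepB : E ≤ smin := by
    linarith [hsmin_eq, hsplitTm, hb1, hb2, hb3]
  -- Step C : perturbation inequality
  have stepC : ∀ t : ℝ, 0 < t → t < 1 → (sg + t * D) * (smin - t * E) ≤ sg * smin := by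
    intro t ht ht1
    set qt : G → A → ℝ := fun g' a =>
      if I.Ga a = Finset.univ then
        (if g' = g then (1 - t) * qstar g a
         else if g' = gmin then qstar gmin a + t * qstar g a
         else qstar g' a)
      else qstar g' a with hqt
    have hqt0 : ∀ g' a, 0 ≤ qt g' a := by
      intro g' a
      rw [hqt]
      dsimp only
      split_ifs with h1 h2 h3
      · exact mul_nonneg (by linarith) (hq0 g a)
      · exact add_nonneg (hq0 gmin a) (mul_nonneg ht.le (hq0 g a))
      · exact hq0 g' a
      · exact hq0 g' a
    have hqtsum : ∀ a ∈ I.Asub, ∑ g', qt g' a = 1 := by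
      intro a ha
      by_cases hsh : I.Ga a = Finset.univ
      · have heq : ∀ g', qt g' a = qstar g' a
            + ((if g' = g then -(t * qstar g a) else 0)
              + (if g' = gmin then t * qstar g a else 0)) := by
          intro g'
          by_cases h1 : g' = g
          · subst h1
            simp [hqt, hsh, hg]
            ring
          · by_cases h2 : g' = gmin
            · subst h2
              simp [hqt, hsh, h1]
            · simp [hqt, hsh, h1, h2]
        rw [Finset.sum_congr rfl (fun g' _ => heq g')]
        rw [Finset.sum_add_distrib, Finset.sum_add_distrib, hqsum a ha]
        simp [Finset.sum_ite_eq']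
      · have heq : ∀ g', qt g' a = qstar g' a := fun g' => by simp [hqt, hsh]
        rw [Finset.sum_congr rfl (fun g' _ => heq g'), hqsum a ha]
    have hqtzero : ∀ g' a, ¬(a ∈ I.Asub ∧ a ∈ I.acc g') → qt g' a = 0 := by
      intro g' a hcon
      by_cases hsh : I.Ga a = Finset.univ
      · exact absurd ⟨hasub a hsh, hmem_acc a hsh g'⟩ hcon
      · rw [hqt]
        dsimp only
        rw [if_neg hsh]
        exact hqzero g' a hcon
    have hs_other : ∀ g', g' ≠ g → g' ≠ gmin → I.s qt g' = I.s qstar g' := by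
      intro g' h1 h2
      have heq : ∀ a, qt g' a = qstar g' a := by
        intro a
        simp [hqt, h1, h2]
      show (∑ a ∈ I.Asubg g', I.Δ g' a * I.Jg g' a)
          - (∑ a ∈ I.Asubg g' ∩ I.Asub, I.Δ g' a * qt g' a * I.J a)
        = (∑ a ∈ I.Asubg g', I.Δ g' a * I.Jg g' a)
          - ∑ a ∈ I.Asubg g' ∩ I.Asub, I.Δ g' a * qstar g' a * I.J a
      have hsum : (∑ a ∈ I.Asubg g' ∩ I.Asub, I.Δ g' a * qt g' a * I.J a)
          = ∑ a ∈ I.Asubg g' ∩ I.Asub, I.Δ g' a * qstar g' a * I.J a :=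
        Finset.sum_congr rfl (fun a _ => by rw [heq a])
      rw [hsum]
    have hTfS : T.filter (fun a => I.Ga a = Finset.univ) = S := by
      ext a
      constructor
      · intro h
        rw [hS]
        simp [(Finset.mem_filter.mp h).2]
      · intro h
        exact Finset.mem_filter.mpr ⟨hSsubT g h, hSmem a h⟩
    have hTmfS : Tm.filter (fun a => I.Ga a = Finset.univ) = S := by
      ext a
      constructor
      · intro h
        rw [hS]
        simp [(Finset.mem_filter.mp h).2]
      · intro h
        exact Finset.mem_filter.mpr ⟨hSsubT gmin h, hSmem a h⟩
    have hs_g : I.s qt g = sg + t * D := by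
      have heq : ∀ a, I.Δ g a * qt g a * I.J a
          = I.Δ g a * qstar g a * I.J a
            - (if I.Ga a = Finset.univ then t * (I.Δ g a * qstar g a * I.J a) else 0) := by
        intro a
        by_cases hsh : I.Ga a = Finset.univ
        · simp only [hqt, hsh, if_true, if_pos rfl]
          ring
        · simp [hqt, hsh]
      have h2 : (∑ a ∈ T, I.Δ g a * qt g a * I.J a)
          = (∑ a ∈ T, I.Δ g a * qstar g a * I.J a) - t * D := by
        rw [Finset.sum_congr rfl (fun a _ => heq a), Finset.sum_sub_distrib]
        congr 1
        rw [← Finset.sum_filter, hTfS, hD, Finset.mul_sum]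
      have hs_eq2 : I.s qt g = (∑ a ∈ I.Asubg g, I.Δ g a * I.Jg g a)
          - ∑ a ∈ T, I.Δ g a * qt g a * I.J a := rfl
      rw [hs_eq2, h2, hsg_eq]
      ring
    have hs_min : I.s qt gmin = smin - t * E := by
      have heq : ∀ a, I.Δ gmin a * qt gmin a * I.J a
          = I.Δ gmin a * qstar gmin a * I.J a
            + (if I.Ga a = Finset.univ then t * (I.Δ gmin a * qstar g a * I.J a) else 0) := by
        intro a
        by_cases hsh : I.Ga a = Finset.univ
        · simp only [hqt, hsh, if_true, if_neg (Ne.symm hg), if_pos rfl]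
          ring
        · simp [hqt, hsh]
      have h2 : (∑ a ∈ Tm, I.Δ gmin a * qt gmin a * I.J a)
          = (∑ a ∈ Tm, I.Δ gmin a * qstar gmin a * I.J a) + t * E := by
        rw [Finset.sum_congr rfl (fun a _ => heq a), Finset.sum_add_distrib]
        congr 1
        rw [← Finset.sum_filter, hTmfS, hE, Finset.mul_sum]
      have hs_eq2 : I.s qt gmin = (∑ a ∈ I.Asubg gmin, I.Δ gmin a * I.Jg gmin a)
          - ∑ a ∈ Tm, I.Δ gmin a * qt gmin a * I.J a := rfl
      rw [hs_eq2, h2, hsmin_eq]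
      ring
    have p1 : 0 < sg + t * D := by
      have h1 := hpos g
      have h3 : 0 ≤ t * D := mul_nonneg ht.le hD0
      linarith
    have p2 : 0 < smin - t * E := by
      have h1 := hpos gmin
      have h2 : t * E ≤ t * smin := mul_le_mul_of_nonneg_left stepB ht.le
      have h3 : 0 < (1 - t) * smin := mul_pos (by linarith) h1
      nlinarith [h2, h3]
    have hpos' : ∀ g', 0 < I.s qt g' := by
      intro g'
      by_cases h1 : g' = g
      · rw [h1, hs_g]; exact p1
      · by_cases h2 : g' = gmin
        · rw [h2, hs_min]; exact p2
        · rw [hs_other g' h1 h2]; exact hpos g'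
    have hkey := hoptim qt ⟨hqt0, hqtsum, hqtzero⟩ hpos'
    have hsplitsum : ∀ f : G → ℝ,
        (∑ g', f g') = (∑ g' ∈ Finset.univ \ {g, gmin}, f g') + (f g + f gmin) := by
      intro f
      have h1 : ∑ g' ∈ ({g, gmin} : Finset G), f g' = f g + f gmin := Finset.sum_pair hg
      have h2 := Finset.sum_sdiff (f := f) (Finset.subset_univ ({g, gmin} : Finset G))
      rw [← h2, h1]
    rw [hsplitsum (fun g' => Real.log (I.s qt g')),
      hsplitsum (fun g' => Real.log (I.s qstar g'))] at hkey
    have hsame : ∑ g' ∈ Finset.univ \ {g, gmin}, Real.log (I.s qt g')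
        = ∑ g' ∈ Finset.univ \ {g, gmin}, Real.log (I.s qstar g') := by
      apply Finset.sum_congr rfl
      intro g' hg'
      have hmem := Finset.mem_sdiff.mp hg'
      have h1 : g' ≠ g := fun h => hmem.2 (by simp [h])
      have h2 : g' ≠ gmin := fun h => hmem.2 (by simp [h])
      rw [hs_other g' h1 h2]
    rw [hsame, hs_g, hs_min] at hkey
    have hlog : Real.log ((sg + t * D) * (smin - t * E)) ≤ Real.log (sg * smin) := by
      rw [Real.log_mul p1.ne' p2.ne', Real.log_mul (hpos g).ne' (hpos gmin).ne']
      linarith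
    exact (Real.log_le_log_iff (mul_pos p1 p2) (mul_pos (hpos g) (hpos gmin))).mp hlog
  -- Step D : D * smin ≤ E * sg
  have hDE : 0 ≤ D * E := mul_nonneg hD0 hE0
  have stepD : D * smin ≤ E * sg := by
    by_contra hcon
    push_neg at hcon
    set c : ℝ := D * smin - E * sg with hc
    have hc0 : 0 < c := by rw [hc]; linarith
    set t : ℝ := min (1/2 : ℝ) (c / (2 * (D * E + 1))) with htdef
    have htpos : 0 < t := lt_min (by norm_num) (by positivity)
    have htlt1 : t < 1 := lt_of_le_of_lt (min_le_left _ _) (by norm_num)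
    have h := stepC t htpos htlt1
    have h2 : t * c ≤ t * (t * (D * E)) := by nlinarith
    have h3 : c ≤ t * (D * E) := le_of_mul_le_mul_left h2 htpos
    have h4 : t * (D * E) ≤ (c / (2 * (D * E + 1))) * (D * E) :=
      mul_le_mul_of_nonneg_right (min_le_right _ _) hDE
    have h5 : (c / (2 * (D * E + 1))) * (D * E) < c := by
      rw [div_mul_eq_mul_div, div_lt_iff₀ (by positivity)]
      nlinarith
    linarith
  -- conclude
  have stepE : D ≤ sg := by
    have h1 : E * sg ≤ smin * sg := mul_le_mul_of_nonneg_right stepB (hpos g).le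
    have h2 : D * smin ≤ smin * sg := le_trans stepD h1
    nlinarith [hpos gmin]
  linarith [stepA, stepE]
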